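/- arXiv:2011.04617 — 4 statements merged into one kernel-verified Lean document; each statement's English description precedes it below -/
import Mathlib

section
/- For positive reals L_x, c, L_t and positive integer n, the inequality 2·n^{3/2}·(L_x/(c·L_t) + c·L_t/L_x) ≥ (1/2)·√(n·L_x² + c²·L_t²)·(2·L_x^n + 2·n·c·L_x^{n−1}·L_t) / (c·L_x^n·L_t) holds. -/
lemma cuboid_key (N a b : ℝ) (hN : 1 ≤ N) (ha : 0 < a) (hb : 0 < b) :
    Real.sqrt (N * a ^ 2 + b ^ 2) * (a + N * b) ≤
      2 * N ^ ((3 : ℝ) / 2) * (a ^ 2 + b ^ 2) := by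
  have hN0 : (0 : ℝ) ≤ N := le_trans zero_le_one hN
  have h32 : N ^ ((3 : ℝ) / 2) = Real.sqrt (N ^ 3) := by
    rw [Real.sqrt_eq_rpow, ← Real.rpow_natCast N 3, ← Real.rpow_mul hN0]
    norm_num
  rw [h32]
  have hin : (0 : ℝ) ≤ N * a ^ 2 + b ^ 2 := by positivity
  have hN3 : (0 : ℝ) ≤ N ^ 3 := by positivity
  set x := Real.sqrt (N * a ^ 2 + b ^ 2) with hx
  set y := Real.sqrt (N ^ 3) with hy
  have hx0 : 0 ≤ x := Real.sqrt_nonneg _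
  have hy0 : 0 ≤ y := Real.sqrt_nonneg _
  have hx2 : x ^ 2 = N * a ^ 2 + b ^ 2 := Real.sq_sqrt hin
  have hy2 : y ^ 2 = N ^ 3 := Real.sq_sqrt hN3
  have hab : 0 ≤ a + N * b := by positivity
  -- squared inequality
  have hsq : (x * (a + N * b)) ^ 2 ≤ (2 * y * (a ^ 2 + b ^ 2)) ^ 2 := by
    have : (N * a ^ 2 + b ^ 2) * (a + N * b) ^ 2 ≤ 4 * N ^ 3 * (a ^ 2 + b ^ 2) ^ 2 := by
      nlinarith [sq_nonneg (a - b), sq_nonneg (a + b), sq_nonneg (N - 1), mul_pos ha hb,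
        sq_nonneg a, sq_nonneg b, mul_nonneg (mul_nonneg hN0 hN0) (sq_nonneg (a - b)),
        mul_nonneg (sub_nonneg.2 hN) (mul_nonneg (mul_nonneg hN0 hN0) (sq_nonneg (a+b))),
        mul_nonneg (sub_nonneg.2 hN) (mul_nonneg hN0 (sq_nonneg (a-b))),
        mul_nonneg (sub_nonneg.2 hN) (sq_nonneg (a+b)),
        mul_nonneg (sub_nonneg.2 hN) (sq_nonneg (a-b))]
    calc (x * (a + N * b)) ^ 2 = (N * a ^ 2 + b ^ 2) * (a + N * b) ^ 2 := by
          rw [mul_pow, hx2]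
      _ ≤ 4 * N ^ 3 * (a ^ 2 + b ^ 2) ^ 2 := this
      _ = (2 * y * (a ^ 2 + b ^ 2)) ^ 2 := by rw [mul_pow, mul_pow, hy2]; ring
  have h1 : 0 ≤ x * (a + N * b) := mul_nonneg hx0 hab
  have h2 : 0 ≤ 2 * y * (a ^ 2 + b ^ 2) := by positivity
  nlinarith [hsq, h1, h2]

/-- Cuboid shape-regularity: η_cuboid = 2n^{3/2}(L_x/(cL_t)+cL_t/L_x) is admissible. -/
theorem cuboid_shape_regularity (n : ℕ) (hn : 1 ≤ n) (Lx c Lt : ℝ)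
    (hLx : 0 < Lx) (hc : 0 < c) (hLt : 0 < Lt) :
    2 * (n : ℝ) ^ ((3 : ℝ) / 2) * (Lx / (c * Lt) + c * Lt / Lx) ≥
      (1 / 2) * Real.sqrt ((n : ℝ) * Lx ^ 2 + c ^ 2 * Lt ^ 2) *
        (2 * Lx ^ n + 2 * (n : ℝ) * c * Lx ^ (n - 1) * Lt) / (c * Lx ^ n * Lt) := by
  obtain ⟨k, rfl⟩ : ∃ k, n = k + 1 := ⟨n - 1, (Nat.succ_pred_eq_of_pos hn).symm⟩
  have hk : (k + 1 : ℕ) - 1 = k := by simp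
  rw [hk]
  set N : ℝ := ((k + 1 : ℕ) : ℝ) with hNdef
  have hN1 : (1 : ℝ) ≤ N := by rw [hNdef]; push_cast; linarith
  have hPk : (0 : ℝ) < Lx ^ k := pow_pos hLx k
  have hS0 : 0 ≤ Real.sqrt (N * Lx ^ 2 + c ^ 2 * Lt ^ 2) := Real.sqrt_nonneg _
  have key : Real.sqrt (N * Lx ^ 2 + c ^ 2 * Lt ^ 2) * (Lx + N * (c * Lt)) ≤
      2 * N ^ ((3 : ℝ) / 2) * (Lx ^ 2 + (c * Lt) ^ 2) := by
    have := cuboid_key N Lx (c * Lt) hN1 hLx (mul_pos hc hLt)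
    have heq : N * Lx ^ 2 + (c * Lt) ^ 2 = N * Lx ^ 2 + c ^ 2 * Lt ^ 2 := by ring
    rwa [heq] at this
  rw [ge_iff_le]
  have hR : (1 / 2) * Real.sqrt (N * Lx ^ 2 + c ^ 2 * Lt ^ 2) *
        (2 * Lx ^ (k + 1) + 2 * N * c * Lx ^ k * Lt) / (c * Lx ^ (k + 1) * Lt) =
      Real.sqrt (N * Lx ^ 2 + c ^ 2 * Lt ^ 2) * (Lx + N * (c * Lt)) / (c * Lx * Lt) := by
    rw [pow_succ]
    field_simp
    ring
  have hL : 2 * N ^ ((3 : ℝ) / 2) * (Lx / (c * Lt) + c * Lt / Lx) =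
      2 * N ^ ((3 : ℝ) / 2) * (Lx ^ 2 + (c * Lt) ^ 2) / (c * Lx * Lt) := by
    field_simp
  rw [hR, hL]
  exact div_le_div_of_nonneg_right key (by positivity)
end

section
/- Let ρ, G be smooth positive functions of the space variable x ∈ ℝⁿ (independent of time), and define the operator □_{ρ,G} f := ∇·((1/ρ)∇f) − G ∂_t² f on smooth functions of (x,t). Let u be a (p+1)-times continuously differentiable solution of □_{ρ,G} u = 0 on a neighborhood of a point (x_K,t_K). Then the Taylor polynomial T^{p+1}[u] of u of order p+1 centered at (x_K,t_K) satisfies D^𝒊(□_{ρ,G} T^{p+1}[u])(x_K,t_K) = 0 for every multi-index 𝒊 ∈ ℕ₀^{n+1} with |𝒊| ≤ p−2; that is, T^{p+1}[u] lies in the quasi-Trefftz space ℚ𝕌^p. -/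
/-- Partial derivative in the k-th coordinate. -/
noncomputable def pd (d : ℕ) (k : Fin d) (f : (Fin d → ℝ) → ℝ) : (Fin d → ℝ) → ℝ :=
  fun x => deriv (fun s => f (Function.update x k s)) (x k)

/-- Multi-index partial derivative D^i f. -/
noncomputable def mderiv (d : ℕ) (i : Fin d → ℕ) (f : (Fin d → ℝ) → ℝ) : (Fin d → ℝ) → ℝ :=
  ((List.ofFn fun k : Fin d => (pd d k)^[i k]).foldr (· ∘ ·) id) f

/-- Taylor polynomial of order m+1 (degree ≤ m) of f centered at z. -/
noncomputable def taylorPoly (d m : ℕ) (z : Fin d → ℝ) (f : (Fin d → ℝ) → ℝ) :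
    (Fin d → ℝ) → ℝ :=
  fun y => ∑ kk ∈ Finset.range (m + 1), ∑ i ∈ Finset.Nat.antidiagonalTuple d kk,
    ((∏ l, (y l - z l) ^ (i l)) / ((∏ l, Nat.factorial (i l) : ℕ) : ℝ)) * mderiv d i f z

/-- Spatial part of a space–time point. -/
def spatial (n : ℕ) (x : Fin (n + 1) → ℝ) : Fin n → ℝ := fun k => x k.castSucc

/-- Wave operator □_{ρ,G} f = ∇·((1/ρ)∇f) − G ∂_t² f on space–time ℝ^n × ℝ. -/
noncomputable def boxOp (n : ℕ) (ρ G : (Fin n → ℝ) → ℝ) (f : (Fin (n + 1) → ℝ) → ℝ) :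
    (Fin (n + 1) → ℝ) → ℝ :=
  fun x =>
    (∑ k : Fin n, pd (n + 1) k.castSucc
        (fun y => (ρ (spatial n y))⁻¹ * pd (n + 1) k.castSucc f y) x)
      - G (spatial n x) * pd (n + 1) (Fin.last n) (pd (n + 1) (Fin.last n) f) x


noncomputable def pdList (d : ℕ) : List (Fin d) → ((Fin d → ℝ) → ℝ) → ((Fin d → ℝ) → ℝ)
  | [], f => f
  | k :: L, f => pd d k (pdList d L f)

variable {d : ℕ}

lemma pd_of_hasFDerivAt {f : (Fin d → ℝ) → ℝ} {x : Fin d → ℝ} {L : (Fin d → ℝ) →L[ℝ] ℝ}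
    (hf : HasFDerivAt f L x) (k : Fin d) : pd d k f x = L (Pi.single k 1) := by
  have h0 : HasFDerivAt f L (Function.update x k (x k)) := by rwa [Function.update_eq_self]
  exact (h0.comp_hasDerivAt (x k) (hasDerivAt_update x k (x k))).deriv

lemma pd_eq_fderiv {f : (Fin d → ℝ) → ℝ} {x : Fin d → ℝ} (hf : DifferentiableAt ℝ f x)
    (k : Fin d) : pd d k f x = fderiv ℝ f x (Pi.single k 1) :=
  pd_of_hasFDerivAt hf.hasFDerivAt k

lemma pd_congr_nhds {f g : (Fin d → ℝ) → ℝ} {x : Fin d → ℝ} (k : Fin d)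
    (h : f =ᶠ[nhds x] g) : pd d k f x = pd d k g x := by
  have hc : Filter.Tendsto (fun s : ℝ => Function.update x k s) (nhds (x k)) (nhds x) := by
    have := (hasDerivAt_update x k (x k)).continuousAt
    rwa [ContinuousAt, Function.update_eq_self] at this
  exact Filter.EventuallyEq.deriv_eq (h.comp_tendsto hc)

lemma pd_eqOn {U : Set (Fin d → ℝ)} (hU : IsOpen U) {f g : (Fin d → ℝ) → ℝ} (k : Fin d)
    (h : Set.EqOn f g U) : Set.EqOn (pd d k f) (pd d k g) U := fun _ hx =>
  pd_congr_nhds k (h.eventuallyEq_of_mem (hU.mem_nhds hx))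

lemma pdList_eqOn {U : Set (Fin d → ℝ)} (hU : IsOpen U) (L : List (Fin d))
    {f g : (Fin d → ℝ) → ℝ} (h : Set.EqOn f g U) :
    Set.EqOn (pdList d L f) (pdList d L g) U := by
  induction L with
  | nil => exact h
  | cons k L ih => exact pd_eqOn hU k ih

lemma pdList_append (A B : List (Fin d)) (f : (Fin d → ℝ) → ℝ) :
    pdList d (A ++ B) f = pdList d A (pdList d B f) := by
  induction A with
  | nil => rfl
  | cons k A ih => simp [pdList, ih]

lemma pdList_replicate (m : ℕ) (k : Fin d) (f : (Fin d → ℝ) → ℝ) :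
    pdList d (List.replicate m k) f = (pd d k)^[m] f := by
  induction m with
  | zero => rfl
  | succ m ih => rw [List.replicate_succ, Function.iterate_succ_apply']; simp [pdList, ih]

/-- The canonical sorted list of a multi-index. -/
def sList (d : ℕ) (i : Fin d → ℕ) : List (Fin d) :=
  (List.finRange d).flatMap fun k => List.replicate (i k) k

lemma mderiv_eq_pdList (i : Fin d → ℕ) (f : (Fin d → ℝ) → ℝ) :
    mderiv d i f = pdList d (sList d i) f := by
  have key : ∀ KS : List (Fin d),
      ((KS.map fun k => (pd d k)^[i k]).foldr (· ∘ ·) id) f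
        = pdList d (KS.flatMap fun k => List.replicate (i k) k) f := by
    intro KS
    induction KS with
    | nil => rfl
    | cons k KS ih =>
        simp only [List.map_cons, List.foldr_cons, List.flatMap_cons, pdList_append,
          pdList_replicate, Function.comp_apply, ih]
  rw [mderiv, List.ofFn_eq_map, key, sList]

lemma count_sList (i : Fin d → ℕ) (k : Fin d) : (sList d i).count k = i k := by
  have key : ∀ KS : List (Fin d), KS.Nodup →
      (KS.flatMap fun k' => List.replicate (i k') k').count k
        = if k ∈ KS then i k else 0 := by
    intro KS
    induction KS with
    | nil => simp
    | cons k' KS ih =>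
        intro hnd
        rcases List.nodup_cons.1 hnd with ⟨hk', hnd'⟩
        rw [List.flatMap_cons, List.count_append, ih hnd', List.count_replicate]
        by_cases h : k = k'
        · subst h; simp [hk']
        · simp [h, Ne.symm h]
  rw [sList, key _ (List.nodup_finRange d)]
  simp [List.mem_finRange]

lemma sum_count (L : List (Fin d)) : ∑ k, L.count k = L.length := by
  induction L with
  | nil => simp
  | cons a L ih =>
      simp only [List.count_cons, List.length_cons, ← ih, Finset.sum_add_distrib]
      congr 1
      simp

lemma itW_smooth {U : Set (Fin d → ℝ)} (hU : IsOpen U) {N : ℕ} {f : (Fin d → ℝ) → ℝ}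
    (hf : ContDiffOn ℝ N f U) {m M : ℕ} (hm : m + M ≤ N) :
    ContDiffOn ℝ M (iteratedFDerivWithin ℝ m f U) U := fun x hx =>
  (hf x hx).iteratedFDerivWithin_right hU.uniqueDiffOn
    (by exact_mod_cast (by omega : M + m ≤ N)) hx

lemma itW_apply_smooth {U : Set (Fin d → ℝ)} (hU : IsOpen U) {N : ℕ} {f : (Fin d → ℝ) → ℝ}
    (hf : ContDiffOn ℝ N f U) {m M : ℕ} (hm : m + M ≤ N) (vs : Fin m → (Fin d → ℝ)) :
    ContDiffOn ℝ M (fun y => iteratedFDerivWithin ℝ m f U y vs) U :=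
  (ContinuousMultilinearMap.apply ℝ (fun _ : Fin m => (Fin d → ℝ)) ℝ vs).contDiff.comp_contDiffOn
    (itW_smooth hU hf hm)

/-- The bridge between `pdList` and iterated Fréchet derivatives. -/
lemma pdList_eq_itW {U : Set (Fin d → ℝ)} (hU : IsOpen U) {N : ℕ}
    {f : (Fin d → ℝ) → ℝ} (hf : ContDiffOn ℝ N f U) :
    ∀ L : List (Fin d), L.length ≤ N → ∀ x ∈ U,
      pdList d L f x
        = iteratedFDerivWithin ℝ L.length f U x (fun q => Pi.single (L.get q) 1) := by
  intro L
  induction L with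
  | nil =>
      intro _ x hx
      simp [pdList, iteratedFDerivWithin_zero_apply]
  | cons k L ih =>
      intro hlen x hx
      have hlen' : L.length ≤ N := by simp at hlen; omega
      set m := L.length with hm
      set vs : Fin m → (Fin d → ℝ) := fun q => Pi.single (L.get q) 1 with hvs
      set G := iteratedFDerivWithin ℝ m f U with hG
      have hEq : Set.EqOn (pdList d L f) (fun y => G y vs) U := fun y hy => ih hlen' y hy
      have hGd : DifferentiableAt ℝ G x := by
        have : DifferentiableOn ℝ G U := by
          refine hf.differentiableOn_iteratedFDerivWithin ?_ hU.uniqueDiffOn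
          exact_mod_cast (by simpa using hlen : m + 1 ≤ N)
        exact (this x hx).differentiableAt (hU.mem_nhds hx)
      have h1 : pdList d (k :: L) f x = pd d k (fun y => G y vs) x :=
        pd_eqOn hU k hEq hx
      have h2 : pd d k (fun y => G y vs) x
          = fderiv ℝ (fun y => G y vs) x (Pi.single k 1) :=
        pd_eq_fderiv (hGd.continuousMultilinear_apply_const vs) k
      have h3 : fderiv ℝ (fun y => G y vs) x (Pi.single k 1)
          = fderiv ℝ G x (Pi.single k 1) vs :=
        fderiv_continuousMultilinear_apply_const_apply hGd vs _
      have h4 : fderiv ℝ G x = fderivWithin ℝ G U x := (fderivWithin_of_isOpen hU hx).symm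
      rw [h1, h2, h3, h4]
      show fderivWithin ℝ G U x (Pi.single k 1) vs
          = iteratedFDerivWithin ℝ (m + 1) f U x
              (fun q : Fin (m + 1) => Pi.single ((k :: L).get q) 1)
      have htt : Fin.tail (fun q : Fin (m + 1) => (Pi.single ((k :: L).get q) 1 : Fin d → ℝ))
          = vs := by
        funext q
        rfl
      rw [iteratedFDerivWithin_succ_apply_left, htt]
      rfl

lemma pd_pd_comm {U : Set (Fin d → ℝ)} (hU : IsOpen U) {g : (Fin d → ℝ) → ℝ}
    (hg : ContDiffOn ℝ 2 g U) (j k : Fin d) :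
    Set.EqOn (pd d j (pd d k g)) (pd d k (pd d j g)) U := by
  have hdg : ∀ y ∈ U, DifferentiableAt ℝ g y := fun y hy =>
    ((hg.differentiableOn (by norm_num)) y hy).differentiableAt (hU.mem_nhds hy)
  have hfd : DifferentiableOn ℝ (fderiv ℝ g) U :=
    (hg.fderiv_of_isOpen (m := 1) hU (by norm_num)).differentiableOn (by norm_num)
  have key : ∀ a b : Fin d, ∀ x ∈ U,
      pd d a (pd d b g) x = fderiv ℝ (fderiv ℝ g) x (Pi.single a 1) (Pi.single b 1) := by
    intro a b x hx
    have h1 : Set.EqOn (pd d b g) (fun y => fderiv ℝ g y (Pi.single b 1)) U := fun y hy =>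
      pd_eq_fderiv (hdg y hy) b
    have hda : DifferentiableAt ℝ (fderiv ℝ g) x :=
      (hfd x hx).differentiableAt (hU.mem_nhds hx)
    have h2 : pd d a (pd d b g) x = pd d a (fun y => fderiv ℝ g y (Pi.single b 1)) x :=
      pd_eqOn hU a h1 hx
    have h3 : pd d a (fun y => fderiv ℝ g y (Pi.single b 1)) x
        = fderiv ℝ (fun y => fderiv ℝ g y (Pi.single b 1)) x (Pi.single a 1) :=
      pd_eq_fderiv (hda.clm_apply (differentiableAt_const _)) a
    rw [h2, h3, fderiv_clm_apply hda (differentiableAt_const _)]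
    simp
  intro x hx
  rw [key j k x hx, key k j x hx]
  have hsym : IsSymmSndFDerivAt ℝ g x := by
    refine (hg.contDiffAt (hU.mem_nhds hx)).isSymmSndFDerivAt ?_
    simp [minSmoothness_of_isRCLikeNormedField]
  exact hsym (Pi.single j 1) (Pi.single k 1)

lemma pdList_perm {U : Set (Fin d → ℝ)} (hU : IsOpen U) {N : ℕ} {u : (Fin d → ℝ) → ℝ}
    (hu : ContDiffOn ℝ N u U) {L L' : List (Fin d)} (hperm : L.Perm L')
    (hlen : L.length ≤ N) : Set.EqOn (pdList d L u) (pdList d L' u) U := by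
  induction hperm with
  | nil => exact fun x _ => rfl
  | cons a h ih =>
      exact pd_eqOn hU a (ih (by simp at hlen ⊢; omega))
  | swap a b l =>
      have hm2 : l.length + 2 ≤ N := by simp at hlen; omega
      have hB : Set.EqOn (pdList d l u)
          (fun y => iteratedFDerivWithin ℝ l.length u U y (fun q => Pi.single (l.get q) 1)) U :=
        fun y hy => pdList_eq_itW hU hu l (by omega) y hy
      have hgt2 : ContDiffOn ℝ 2
          (fun y => iteratedFDerivWithin ℝ l.length u U y (fun q => Pi.single (l.get q) 1)) U := by
        have := itW_apply_smooth (M := 2) hU hu hm2 (fun q => Pi.single (l.get q) 1)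
        exact_mod_cast this
      have e1 := pd_eqOn hU b (pd_eqOn hU a hB)
      have e2 := pd_pd_comm hU hgt2 b a
      have e3 := pd_eqOn hU a (pd_eqOn hU b fun y hy => (hB hy).symm)
      exact (e1.trans e2).trans e3
  | trans h1 h2 ih1 ih2 =>
      exact (ih1 hlen).trans (ih2 (h1.length_eq ▸ hlen))

/-- The basic monomial centered at `z`. -/
noncomputable def mono (z : Fin d → ℝ) (m : Fin d → ℕ) : (Fin d → ℝ) → ℝ :=
  fun y => ∏ l, (y l - z l) ^ m l

lemma mono_exp_update (z x : Fin d → ℝ) (m : Fin d → ℕ) (k : Fin d) (c : ℕ) :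
    mono z (Function.update m k c) x
      = (x k - z k) ^ c * ∏ l ∈ Finset.univ \ {k}, (x l - z l) ^ m l := by
  have h1 : (fun l => (x l - z l) ^ Function.update m k c l)
      = Function.update (fun l => (x l - z l) ^ m l) k ((x k - z k) ^ c) := by
    funext l
    by_cases h : l = k
    · subst h; simp
    · simp [Function.update_of_ne h]
  rw [mono, h1, Finset.prod_update_of_mem (Finset.mem_univ k)]

lemma mono_pt_update (z x : Fin d → ℝ) (m : Fin d → ℕ) (k : Fin d) (s : ℝ) :
    mono z m (Function.update x k s)
      = (s - z k) ^ m k * ∏ l ∈ Finset.univ \ {k}, (x l - z l) ^ m l := by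
  have h1 : (fun l => (Function.update x k s l - z l) ^ m l)
      = Function.update (fun l => (x l - z l) ^ m l) k ((s - z k) ^ m k) := by
    funext l
    by_cases h : l = k
    · subst h; simp
    · simp [Function.update_of_ne h]
  rw [mono, h1, Finset.prod_update_of_mem (Finset.mem_univ k)]

lemma hasDerivAt_mono_slice (z : Fin d → ℝ) (m : Fin d → ℕ) (x : Fin d → ℝ) (k : Fin d) :
    HasDerivAt (fun s => mono z m (Function.update x k s))
      ((m k : ℝ) * mono z (Function.update m k (m k - 1)) x) (x k) := by
  have hfun : (fun s => mono z m (Function.update x k s))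
      = fun s => (s - z k) ^ m k * ∏ l ∈ Finset.univ \ {k}, (x l - z l) ^ m l := by
    funext s; rw [mono_pt_update]
  rw [hfun, mono_exp_update]
  have h := (((hasDerivAt_id (x k)).sub_const (z k)).pow (m k)).mul_const
    (∏ l ∈ Finset.univ \ {k}, (x l - z l) ^ m l)
  exact h.congr_deriv (by simp only [id_eq]; ring)

lemma count_cons_fun (k : Fin d) (L : List (Fin d)) :
    (fun k' => (k :: L).count k') = Function.update (fun k' => L.count k') k (L.count k + 1) := by
  funext k'
  by_cases h : k' = k
  · subst h; simp
  · simp [Function.update_of_ne h, List.count_cons_of_ne (Ne.symm h)]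

lemma desc_step (i cnt : Fin d → ℕ) (k : Fin d) :
    (∏ k', (i k').descFactorial (Function.update cnt k (cnt k + 1) k'))
      = (i k - cnt k) * ∏ k', (i k').descFactorial (cnt k') := by
  have h1 : (fun k' => (i k').descFactorial (Function.update cnt k (cnt k + 1) k'))
      = Function.update (fun k' => (i k').descFactorial (cnt k')) k
          ((i k).descFactorial (cnt k + 1)) := by
    funext l
    by_cases h : l = k
    · subst h; simp
    · simp [Function.update_of_ne h]
  rw [h1, Finset.prod_update_of_mem (Finset.mem_univ k), Nat.descFactorial_succ,
    Finset.prod_eq_mul_prod_sdiff_singleton_of_mem (Finset.mem_univ k)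
      (fun k' => (i k').descFactorial (cnt k'))]
  ring

lemma pdList_comb {ι : Type*} (S : Finset ι) (idx : ι → (Fin d → ℕ)) (coef : ι → ℝ)
    (z : Fin d → ℝ) (L : List (Fin d)) (x : Fin d → ℝ) :
    pdList d L (fun y => ∑ j ∈ S, coef j * mono z (idx j) y) x
      = ∑ j ∈ S, coef j *
          (((∏ k, (idx j k).descFactorial (L.count k) : ℕ) : ℝ) *
            mono z (fun k => idx j k - L.count k) x) := by
  induction L generalizing x with
  | nil => simp [pdList]
  | cons k L ih =>
      have hre : pdList d L (fun y => ∑ j ∈ S, coef j * mono z (idx j) y)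
          = fun y => ∑ j ∈ S, coef j *
              (((∏ k', (idx j k').descFactorial (L.count k') : ℕ) : ℝ) *
                mono z (fun k' => idx j k' - L.count k') y) := funext fun y => ih y
      show pd d k (pdList d L _) x = _
      rw [hre]
      have hD : HasDerivAt (fun s => ∑ j ∈ S, coef j *
            (((∏ k', (idx j k').descFactorial (L.count k') : ℕ) : ℝ) *
              mono z (fun k' => idx j k' - L.count k') (Function.update x k s)))
          (∑ j ∈ S, coef j *
            (((∏ k', (idx j k').descFactorial (L.count k') : ℕ) : ℝ) *
              (((fun k' => idx j k' - L.count k') k : ℝ) *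
                mono z (Function.update (fun k' => idx j k' - L.count k') k
                  ((fun k' => idx j k' - L.count k') k - 1)) x))) (x k) := by
        apply HasDerivAt.fun_sum
        intro j _
        exact ((hasDerivAt_mono_slice z (fun k' => idx j k' - L.count k') x k).const_mul
          _).const_mul _
      have h0 : pd d k (fun y => ∑ j ∈ S, coef j *
            (((∏ k', (idx j k').descFactorial (L.count k') : ℕ) : ℝ) *
              mono z (fun k' => idx j k' - L.count k') y)) x = _ := hD.deriv
      rw [h0]
      refine Finset.sum_congr rfl fun j _ => ?_
      have harg : Function.update (fun k' => idx j k' - L.count k') k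
            ((fun k' => idx j k' - L.count k') k - 1)
          = fun k' => idx j k' - (k :: L).count k' := by
        funext k'
        by_cases h : k' = k
        · subst h; simp [Nat.sub_sub]
        · simp [Function.update_of_ne h, List.count_cons_of_ne (Ne.symm h)]
      have hCnat : (∏ k', (idx j k').descFactorial ((k :: L).count k'))
          = (idx j k - L.count k) * ∏ k', (idx j k').descFactorial (L.count k') := by
        rw [show (∏ k', (idx j k').descFactorial ((k :: L).count k'))
            = ∏ k', (idx j k').descFactorial
                (Function.update (fun k'' => L.count k'') k (L.count k + 1) k') from
          Finset.prod_congr rfl fun l _ => by rw [← congrFun (count_cons_fun k L) l]]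
        exact desc_step (idx j) (fun k'' => L.count k'') k
      rw [harg, hCnat]
      push_cast
      ring

lemma contDiff_taylorPoly (N : WithTop ℕ∞) (p : ℕ) (z : Fin d → ℝ) (u : (Fin d → ℝ) → ℝ) :
    ContDiff ℝ N (taylorPoly d p z u) := by
  unfold taylorPoly
  apply ContDiff.sum; intro kk _
  apply ContDiff.sum; intro i _
  apply ContDiff.mul _ contDiff_const
  apply ContDiff.div_const
  apply contDiff_prod
  intro l _
  exact ((ContinuousLinearMap.proj l : (Fin d → ℝ) →L[ℝ] ℝ).contDiff.sub contDiff_const).pow _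

lemma mono_eval_center (z : Fin d → ℝ) (m : Fin d → ℕ) :
    mono z m z = if m = 0 then 1 else 0 := by
  rcases eq_or_ne m 0 with h | h
  · subst h; simp [mono]
  · rw [if_neg h]
    obtain ⟨l, hl⟩ := Function.ne_iff.1 h
    refine Finset.prod_eq_zero (Finset.mem_univ l) ?_
    rw [sub_self]
    exact zero_pow hl

lemma taylor_as_sum (p : ℕ) (z : Fin d → ℝ) (u : (Fin d → ℝ) → ℝ) :
    taylorPoly d p z u = fun y =>
      ∑ σ ∈ (Finset.range (p + 1)).sigma
          (fun kk => Finset.Nat.antidiagonalTuple d kk),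
        (mderiv d σ.2 u z / ((∏ l, Nat.factorial (σ.2 l) : ℕ) : ℝ)) * mono z σ.2 y := by
  funext y
  rw [taylorPoly, Finset.sum_sigma]
  refine Finset.sum_congr rfl fun kk _ => Finset.sum_congr rfl fun i _ => ?_
  rw [mono]
  ring

lemma pdList_taylor {p : ℕ} (z : Fin d → ℝ) (u : (Fin d → ℝ) → ℝ) {L : List (Fin d)}
    (hL : L.length ≤ p) :
    pdList d L (taylorPoly d p z u) z = mderiv d (fun k => L.count k) u z := by
  rw [taylor_as_sum, pdList_comb]
  have hsum : ∑ k, L.count k = L.length := sum_count L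
  rw [Finset.sum_eq_single (⟨L.length, fun k => L.count k⟩ : Σ _ : ℕ, (Fin d → ℕ))]
  · have h1 : (fun k => L.count k - L.count k) = (0 : Fin d → ℕ) := by
      funext k; simp
    have h2 : (∏ k, (L.count k).descFactorial (L.count k)) = ∏ k, (L.count k).factorial := by
      refine Finset.prod_congr rfl fun k _ => Nat.descFactorial_self _
    simp only [h1, h2, mono_eval_center, if_pos rfl, ↓reduceIte]
    have hc : ((∏ k, (L.count k).factorial : ℕ) : ℝ) ≠ 0 := by
      have hpos : 0 < ∏ k, (L.count k).factorial :=
        Finset.prod_pos fun k _ => Nat.factorial_pos _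
      exact_mod_cast hpos.ne'
    field_simp
  · rintro ⟨s1, s2⟩ hσ hne
    obtain ⟨h1, h2⟩ := Finset.mem_sigma.1 hσ
    have hsum2 : ∑ k, s2 k = s1 := Finset.Nat.mem_antidiagonalTuple.1 h2
    by_cases hidx : s2 = fun k => L.count k
    · exfalso
      apply hne
      subst hidx
      have : s1 = L.length := by rw [← hsum2, hsum]
      subst this
      rfl
    · by_cases hle : ∀ k, L.count k ≤ s2 k
      · have hnz : (fun k => s2 k - L.count k) ≠ 0 := by
          obtain ⟨l, hl⟩ := Function.ne_iff.1 hidx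
          intro h0
          have := congrFun h0 l
          simp only [Pi.zero_apply] at this
          have hle' := hle l
          exact hl (by omega)
        rw [mono_eval_center, if_neg hnz]
        ring
      · push_neg at hle
        obtain ⟨k0, hk0⟩ := hle
        have hz0 : (∏ k, (s2 k).descFactorial (L.count k)) = 0 :=
          Finset.prod_eq_zero (Finset.mem_univ k0) (Nat.descFactorial_eq_zero_iff_lt.2 hk0)
        rw [hz0]
        simp
  · intro hmem
    exact absurd (Finset.mem_sigma.2 ⟨Finset.mem_range.2 (Nat.lt_succ_of_le hL),
      Finset.Nat.mem_antidiagonalTuple.2 hsum⟩) hmem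

lemma pdList_taylor_eq {U : Set (Fin d → ℝ)} (hU : IsOpen U) {z : Fin d → ℝ} (hz : z ∈ U)
    {p : ℕ} {u : (Fin d → ℝ) → ℝ} (hu : ContDiffOn ℝ (p + 1 : ℕ) u U) {L : List (Fin d)}
    (hL : L.length ≤ p) :
    pdList d L (taylorPoly d p z u) z = pdList d L u z := by
  rw [pdList_taylor z u hL, mderiv_eq_pdList]
  have hperm : (sList d (fun k => L.count k)).Perm L :=
    List.perm_iff_count.2 fun k => by rw [count_sList]
  have hlen : (sList d (fun k => L.count k)).length ≤ p + 1 := by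
    have h1 := sum_count (sList d fun k => L.count k)
    have h2 := sum_count L
    have h3 : ∑ k, (sList d fun k' => L.count k').count k = ∑ k, L.count k := by
      refine Finset.sum_congr rfl fun k _ => by rw [count_sList]
    omega
  exact pdList_perm hU hu hperm hlen hz

lemma pdList_ofFn_eq_itW {U : Set (Fin d → ℝ)} (hU : IsOpen U) {N : ℕ}
    {f : (Fin d → ℝ) → ℝ} (hf : ContDiffOn ℝ N f U) :
    ∀ (m : ℕ) (v : Fin m → Fin d), m ≤ N → ∀ x ∈ U,
      pdList d (List.ofFn v) f x
        = iteratedFDerivWithin ℝ m f U x (fun q => Pi.single (v q) 1) := by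
  intro m
  induction m with
  | zero =>
      intro v _ x hx
      rw [List.ofFn_zero]
      simp [pdList, iteratedFDerivWithin_zero_apply]
  | succ m ih =>
      intro v hlen x hx
      rw [List.ofFn_succ]
      set vs : Fin m → (Fin d → ℝ) := fun q => Pi.single (v q.succ) 1 with hvs
      set G := iteratedFDerivWithin ℝ m f U with hG
      have hEq : Set.EqOn (pdList d (List.ofFn fun q => v q.succ) f) (fun y => G y vs) U :=
        fun y hy => ih (fun q => v q.succ) (by omega) y hy
      have hGd : DifferentiableAt ℝ G x := by
        have hdo : DifferentiableOn ℝ G U := by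
          refine hf.differentiableOn_iteratedFDerivWithin ?_ hU.uniqueDiffOn
          exact_mod_cast (show m < N by omega)
        exact (hdo x hx).differentiableAt (hU.mem_nhds hx)
      have h1 : pdList d (v 0 :: List.ofFn fun q => v q.succ) f x
          = pd d (v 0) (fun y => G y vs) x := pd_eqOn hU (v 0) hEq hx
      have h2 : pd d (v 0) (fun y => G y vs) x
          = fderiv ℝ (fun y => G y vs) x (Pi.single (v 0) 1) :=
        pd_eq_fderiv (hGd.continuousMultilinear_apply_const vs) (v 0)
      have h3 : fderiv ℝ (fun y => G y vs) x (Pi.single (v 0) 1)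
          = fderiv ℝ G x (Pi.single (v 0) 1) vs :=
        fderiv_continuousMultilinear_apply_const_apply hGd vs _
      have h4 : fderiv ℝ G x = fderivWithin ℝ G U x := (fderivWithin_of_isOpen hU hx).symm
      rw [h1, h2, h3, h4, iteratedFDerivWithin_succ_apply_left]
      rfl

lemma taylor_diff_vanish {U : Set (Fin d → ℝ)} (hU : IsOpen U) {z : Fin d → ℝ} (hz : z ∈ U)
    {p : ℕ} {u : (Fin d → ℝ) → ℝ} (hu : ContDiffOn ℝ (p + 1 : ℕ) u U) {m : ℕ} (hm : m ≤ p) :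
    iteratedFDerivWithin ℝ m (fun y => taylorPoly d p z u y - u y) U z = 0 := by
  set T := taylorPoly d p z u with hT
  have hTsm : ContDiffOn ℝ (p + 1 : ℕ) T U := (contDiff_taylorPoly _ p z u).contDiffOn
  have hh : ContDiffOn ℝ (p + 1 : ℕ) (fun y => T y - u y) U := hTsm.sub hu
  have hmc : ((m : ℕ) : WithTop ℕ∞) ≤ (((p + 1 : ℕ) : ℕ∞) : WithTop ℕ∞) := by
    exact_mod_cast (by omega : m ≤ p + 1)
  have hTm : ContDiffOn ℝ (m : ℕ) T U := hTsm.of_le hmc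
  have hum : ContDiffOn ℝ (m : ℕ) u U := hu.of_le hmc
  have hsplit : iteratedFDerivWithin ℝ m (fun y => T y - u y) U z
      = iteratedFDerivWithin ℝ m T U z - iteratedFDerivWithin ℝ m u U z := by
    have heq : (fun y => T y - u y) = T + fun y => -u y := by
      funext y; simp [sub_eq_add_neg]
    have hneg : iteratedFDerivWithin ℝ m (fun y => -u y) U z
        = -iteratedFDerivWithin ℝ m u U z := iteratedFDerivWithin_neg_apply hU.uniqueDiffOn hz
    rw [heq, iteratedFDerivWithin_add_apply (hTm z hz) (hum.neg z hz) hU.uniqueDiffOn hz, hneg,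
      sub_eq_add_neg]
  have hbasis : ∀ v : Fin m → Fin d,
      iteratedFDerivWithin ℝ m (fun y => T y - u y) U z (fun q => Pi.single (v q) 1) = 0 := by
    intro v
    have hLlen : (List.ofFn v).length = m := List.length_ofFn (f := v)
    have hbT := pdList_ofFn_eq_itW hU hTsm m v (by omega) z hz
    have hbu := pdList_ofFn_eq_itW hU hu m v (by omega) z hz
    have hTu := pdList_taylor_eq hU hz hu (L := List.ofFn v) (by omega)
    rw [hsplit]
    simp only [ContinuousMultilinearMap.sub_apply]
    rw [← hbT, ← hbu]
    exact sub_eq_zero_of_eq hTu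
  apply ContinuousMultilinearMap.toMultilinearMap_injective
  refine Module.Basis.ext_multilinear (fun _ => Pi.basisFun ℝ (Fin d)) fun v => ?_
  simpa [Pi.basisFun_apply] using hbasis v

section Bilinear

lemma fderivWithin_vanish {E F : Type} [NormedAddCommGroup E] [NormedSpace ℝ E]
    [NormedAddCommGroup F] [NormedSpace ℝ F] {U : Set E} (hUd : UniqueDiffOn ℝ U)
    {z : E} (hz : z ∈ U) {g : E → F} {j : ℕ}
    (h : iteratedFDerivWithin ℝ (j + 1) g U z = 0) :
    iteratedFDerivWithin ℝ j (fderivWithin ℝ g U) U z = 0 := by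
  ext v w
  have h2 := iteratedFDerivWithin_succ_apply_right (𝕜 := ℝ) (f := g) hUd hz (Fin.snoc v w)
  rw [Fin.init_snoc, Fin.snoc_last, h] at h2
  simpa using h2.symm

set_option maxHeartbeats 2000000 in
lemma bilinear_vanish {E : Type} [NormedAddCommGroup E] [NormedSpace ℝ E] {U : Set E}
    (hU : IsOpen U) {z : E} (hz : z ∈ U) :
    ∀ (j : ℕ) {F G H : Type} [NormedAddCommGroup F] [NormedSpace ℝ F] [NormedAddCommGroup G]
      [NormedSpace ℝ G] [NormedAddCommGroup H] [NormedSpace ℝ H]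
      (B : F →L[ℝ] G →L[ℝ] H) (m : ℕ) (f : E → F) (g : E → G),
      ContDiffOn ℝ m f U → ContDiffOn ℝ m g U →
      (∀ j' ≤ m, iteratedFDerivWithin ℝ j' g U z = 0) → j ≤ m →
      iteratedFDerivWithin ℝ j (fun x => B (f x) (g x)) U z = 0 := by
  intro j
  induction j with
  | zero =>
      intro F G H _ _ _ _ _ _ B m f g hf hg hvan _
      have hg0 : g z = 0 := by
        have h0 := hvan 0 (Nat.zero_le _)
        calc g z = iteratedFDerivWithin ℝ 0 g U z (fun _ => 0) :=
              (iteratedFDerivWithin_zero_apply _).symm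
          _ = 0 := by rw [h0]; rfl
      ext v
      rw [iteratedFDerivWithin_zero_apply, hg0]
      simp
  | succ j ih =>
      intro F G H _ _ _ _ _ _ B m f g hf hg hvan hjm
      have hm1 : 1 ≤ m := by omega
      have h1m : (1 : WithTop ℕ∞) ≤ (m : ℕ) := by exact_mod_cast hm1
      set m' := m - 1 with hm'
      have hc : ContDiffOn ℝ (m : ℕ) (fun x => B (f x)) U :=
        B.contDiff.comp_contDiffOn hf
      have hg' : ContDiffOn ℝ (m' : ℕ) (fderivWithin ℝ g U) U :=
        hg.fderivWithin hU.uniqueDiffOn (by exact_mod_cast (show m' + 1 ≤ m by omega))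
      have hc' : ContDiffOn ℝ (m' : ℕ) (fderivWithin ℝ (fun x => B (f x)) U) U :=
        hc.fderivWithin hU.uniqueDiffOn (by exact_mod_cast (show m' + 1 ≤ m by omega))
      have hmm' : ((m' : ℕ) : WithTop ℕ∞) ≤ (m : ℕ) := by
        exact_mod_cast (show m' ≤ m by omega)
      set B₂ : (E →L[ℝ] (G →L[ℝ] H)) →L[ℝ] G →L[ℝ] (E →L[ℝ] H) :=
        ((ContinuousLinearMap.compL ℝ E (G →L[ℝ] H) H).comp
          (ContinuousLinearMap.apply ℝ H)).flip with hB₂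
      set T1 : E → (E →L[ℝ] H) := fun x =>
        (ContinuousLinearMap.compL ℝ E G H) (B (f x)) (fderivWithin ℝ g U x) with hT1
      set T2 : E → (E →L[ℝ] H) := fun x =>
        B₂ (fderivWithin ℝ (fun x' => B (f x')) U x) (g x) with hT2
      have hEq : Set.EqOn (fderivWithin ℝ (fun x => B (f x) (g x)) U)
          (fun x => T1 x + T2 x) U := by
        intro x hx
        have hcx : DifferentiableWithinAt ℝ (fun x => B (f x)) U x :=
          (hc x hx).differentiableWithinAt (by exact_mod_cast (show m ≠ 0 by omega))
        have hgx : DifferentiableWithinAt ℝ g U x :=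
          (hg x hx).differentiableWithinAt (by exact_mod_cast (show m ≠ 0 by omega))
        have e2 : T2 x = (fderivWithin ℝ (fun x' => B (f x')) U x).flip (g x) := by
          ext w
          simp only [hT2, hB₂, ContinuousLinearMap.flip_apply,
            ContinuousLinearMap.comp_apply, ContinuousLinearMap.compL_apply,
            ContinuousLinearMap.apply_apply]
        rw [show fderivWithin ℝ (fun x => B (f x) (g x)) U x
            = (B (f x)).comp (fderivWithin ℝ g U x)
              + (fderivWithin ℝ (fun x' => B (f x')) U x).flip (g x) from
          fderivWithin_clm_apply (hU.uniqueDiffOn x hx) hcx hgx]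
        show _ = T1 x + T2 x
        rw [e2]
        rfl
      have hvan' : ∀ j' ≤ m', iteratedFDerivWithin ℝ j' (fderivWithin ℝ g U) U z = 0 :=
        fun j' hj' => fderivWithin_vanish hU.uniqueDiffOn hz (hvan (j' + 1) (by omega))
      have hvanm' : ∀ j' ≤ m', iteratedFDerivWithin ℝ j' g U z = 0 :=
        fun j' hj' => hvan j' (by omega)
      have hz1 : iteratedFDerivWithin ℝ j T1 U z = 0 := by
        rw [hT1]
        exact ih (ContinuousLinearMap.compL ℝ E G H) m' (fun x => B (f x))
          (fderivWithin ℝ g U) (hc.of_le hmm') hg' hvan' (by omega)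
      have hz2 : iteratedFDerivWithin ℝ j T2 U z = 0 := by
        rw [hT2]
        exact ih B₂ m' (fderivWithin ℝ (fun x' => B (f x')) U) g hc'
          (hg.of_le hmm') hvanm' (by omega)
      have hT1s : ContDiffOn ℝ (m' : ℕ) T1 U := by
        rw [hT1]
        exact ((ContinuousLinearMap.compL ℝ E G H).contDiff.comp_contDiffOn
          (hc.of_le hmm')).clm_apply hg'
      have hT2s : ContDiffOn ℝ (m' : ℕ) T2 U := by
        rw [hT2]
        exact (B₂.contDiff.comp_contDiffOn hc').clm_apply (hg.of_le hmm')
      have hjm' : ((j : ℕ) : WithTop ℕ∞) ≤ (m' : ℕ) := by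
        exact_mod_cast (show j ≤ m' by omega)
      have key : iteratedFDerivWithin ℝ j (fderivWithin ℝ (fun x => B (f x) (g x)) U) U z
          = 0 := by
        rw [iteratedFDerivWithin_congr hEq hz]
        have hadd : iteratedFDerivWithin ℝ j (fun x => T1 x + T2 x) U z
            = iteratedFDerivWithin ℝ j T1 U z + iteratedFDerivWithin ℝ j T2 U z :=
          iteratedFDerivWithin_add_apply' (hT1s.of_le hjm' z hz) (hT2s.of_le hjm' z hz)
            hU.uniqueDiffOn hz
        rw [hadd, hz1, hz2, add_zero]
      ext v
      have h2 := iteratedFDerivWithin_succ_apply_right (𝕜 := ℝ)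
        (f := fun x => B (f x) (g x)) hU.uniqueDiffOn hz v
      rw [key] at h2
      simpa using h2

end Bilinear

lemma itW_apply_vanish {E F H : Type} [NormedAddCommGroup E] [NormedSpace ℝ E]
    [NormedAddCommGroup F] [NormedSpace ℝ F] [NormedAddCommGroup H] [NormedSpace ℝ H]
    {U : Set E} (hU : IsOpen U) {z : E} (hz : z ∈ U) {N : ℕ} {φ : E → (F →L[ℝ] H)}
    (hφ : ContDiffOn ℝ N φ U) {j : ℕ} (hj : j ≤ N)
    (h0 : iteratedFDerivWithin ℝ j φ U z = 0) (v : F) :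
    iteratedFDerivWithin ℝ j (fun y => φ y v) U z = 0 := by
  have hcl := (ContinuousLinearMap.apply ℝ H v).iteratedFDerivWithin_comp_left (hφ z hz)
    hU.uniqueDiffOn hz (by exact_mod_cast hj)
  have heq : (fun y => φ y v) = (ContinuousLinearMap.apply ℝ H v) ∘ φ := rfl
  rw [heq, hcl, h0]
  ext w
  simp

lemma boxOp_eq_fderiv_at {n : ℕ} (ρ G : (Fin n → ℝ) → ℝ)
    (ha : ContDiff ℝ 1 (fun y => (ρ (spatial n y))⁻¹))
    {f : (Fin (n + 1) → ℝ) → ℝ} {V : Set (Fin (n + 1) → ℝ)} (hV : IsOpen V)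
    (hf : ContDiffOn ℝ (2 : ℕ) f V) {x : Fin (n + 1) → ℝ} (hx : x ∈ V) :
    boxOp n ρ G f x
      = (∑ k : Fin n, fderiv ℝ
            (fun y => (ρ (spatial n y))⁻¹ * fderiv ℝ f y (Pi.single k.castSucc 1)) x
            (Pi.single k.castSucc 1))
        - G (spatial n x) * fderiv ℝ
            (fun y => fderiv ℝ f y (Pi.single (Fin.last n) 1)) x
            (Pi.single (Fin.last n) 1) := by
  have hd : ∀ y ∈ V, DifferentiableAt ℝ f y := fun y hy =>
    ((hf.differentiableOn (by norm_num)) y hy).differentiableAt (hV.mem_nhds hy)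
  have hfd : ContDiffOn ℝ (1 : ℕ) (fderiv ℝ f) V :=
    hf.fderiv_of_isOpen hV (by norm_num)
  have hfdapp : ∀ v : Fin (n + 1) → ℝ, ∀ y ∈ V,
      DifferentiableAt ℝ (fun y' => fderiv ℝ f y' v) y := by
    intro v y hy
    have h1 : DifferentiableWithinAt ℝ (fderiv ℝ f) V y :=
      (hfd y hy).differentiableWithinAt (by norm_num)
    exact (h1.differentiableAt (hV.mem_nhds hy)).clm_apply (differentiableAt_const _)
  have hEv : ∀ v : Fin (n + 1), Set.EqOn (pd (n + 1) v f)
      (fun y => fderiv ℝ f y (Pi.single v 1)) V := fun v y hy => pd_eq_fderiv (hd y hy) v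
  rw [boxOp]
  congr 1
  · refine Finset.sum_congr rfl fun k _ => ?_
    have hEq : Set.EqOn (fun y => (ρ (spatial n y))⁻¹ * pd (n + 1) k.castSucc f y)
        (fun y => (ρ (spatial n y))⁻¹ * fderiv ℝ f y (Pi.single k.castSucc 1)) V :=
      fun y hy => by
        show (ρ (spatial n y))⁻¹ * pd (n + 1) k.castSucc f y = _
        rw [hEv k.castSucc hy]
    rw [pd_eqOn hV k.castSucc hEq hx]
    refine pd_eq_fderiv (DifferentiableAt.mul ?_ (hfdapp _ x hx)) k.castSucc
    exact (ha.differentiable (by norm_num)) x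
  · congr 1
    rw [pd_eqOn hV (Fin.last n) (hEv (Fin.last n)) hx]
    exact pd_eq_fderiv (hfdapp _ x hx) (Fin.last n)

noncomputable def whAux (n : ℕ) (a h : (Fin (n + 1) → ℝ) → ℝ) (U : Set (Fin (n + 1) → ℝ))
    (k : Fin n) : (Fin (n + 1) → ℝ) → ℝ :=
  fun y => a y * fderivWithin ℝ h U y (Pi.single k.castSucc 1)

noncomputable def XhAux (n : ℕ) (a b h : (Fin (n + 1) → ℝ) → ℝ) (U : Set (Fin (n + 1) → ℝ)) :
    (Fin (n + 1) → ℝ) → ℝ :=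
  fun x =>
    (∑ k : Fin n, fderivWithin ℝ (whAux n a h U k) U x (Pi.single k.castSucc 1))
      - b x * fderivWithin ℝ
          (fun y => fderivWithin ℝ h U y (Pi.single (Fin.last n) 1)) U x
          (Pi.single (Fin.last n) 1)

section XhFacts

variable {n : ℕ} {a b h : (Fin (n + 1) → ℝ) → ℝ} {U : Set (Fin (n + 1) → ℝ)} {p : ℕ}

lemma fdW_smooth (hU : IsOpen U) (hp : 1 ≤ p) (hh : ContDiffOn ℝ (p + 1 : ℕ) h U) :
    ContDiffOn ℝ (p : ℕ) (fderivWithin ℝ h U) U :=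
  hh.fderivWithin hU.uniqueDiffOn (by exact_mod_cast le_rfl)

lemma whAux_smooth (hU : IsOpen U) (hp : 1 ≤ p) (ha : ContDiff ℝ (p : ℕ) a)
    (hh : ContDiffOn ℝ (p + 1 : ℕ) h U) (k : Fin n) :
    ContDiffOn ℝ (p : ℕ) (whAux n a h U k) U :=
  ha.contDiffOn.mul ((fdW_smooth hU hp hh).clm_apply contDiffOn_const)

lemma XhAux_smooth (hU : IsOpen U) (hp : 1 ≤ p) (ha : ContDiff ℝ (p : ℕ) a)
    (hb : ContDiff ℝ (p : ℕ) b) (hh : ContDiffOn ℝ (p + 1 : ℕ) h U) :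
    ContDiffOn ℝ (p - 1 : ℕ) (XhAux n a b h U) U := by
  have hpm : ((p - 1 : ℕ) : WithTop ℕ∞) ≤ (p : ℕ) := by
    exact_mod_cast (show p - 1 ≤ p by omega)
  have hsucc : ((p - 1 : ℕ) : WithTop ℕ∞) + 1 ≤ ((p : ℕ) : WithTop ℕ∞) := by
    exact_mod_cast (show p - 1 + 1 ≤ p by omega)
  have hsh : ∀ k : Fin n, ContDiffOn ℝ (p - 1 : ℕ)
      (fun x => fderivWithin ℝ (whAux n a h U k) U x (Pi.single k.castSucc 1)) U :=
    fun k => ((whAux_smooth hU hp ha hh k).fderivWithin hU.uniqueDiffOn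
      hsucc).clm_apply contDiffOn_const
  have hgt : ContDiffOn ℝ (p : ℕ)
      (fun y => fderivWithin ℝ h U y (Pi.single (Fin.last n) 1)) U :=
    (fdW_smooth hU hp hh).clm_apply contDiffOn_const
  have hvt : ContDiffOn ℝ (p - 1 : ℕ)
      (fun x => fderivWithin ℝ
        (fun y => fderivWithin ℝ h U y (Pi.single (Fin.last n) 1)) U x
        (Pi.single (Fin.last n) 1)) U :=
    (hgt.fderivWithin hU.uniqueDiffOn hsucc).clm_apply contDiffOn_const
  exact (ContDiffOn.sum fun k _ => hsh k).sub
    ((hb.contDiffOn.of_le hpm).mul hvt)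

lemma XhAux_vanish (hU : IsOpen U) {z : Fin (n + 1) → ℝ} (hz : z ∈ U) (hp : 2 ≤ p)
    (ha : ContDiff ℝ (p : ℕ) a) (hb : ContDiff ℝ (p : ℕ) b)
    (hh : ContDiffOn ℝ (p + 1 : ℕ) h U)
    (hvanh : ∀ j ≤ p, iteratedFDerivWithin ℝ j h U z = 0) {m : ℕ} (hm : m ≤ p - 2) :
    iteratedFDerivWithin ℝ m (XhAux n a b h U) U z = 0 := by
  have hp1 : 1 ≤ p := by omega
  have hfd := fdW_smooth hU hp1 hh
  have hvfd : ∀ j ≤ p - 1, iteratedFDerivWithin ℝ j (fderivWithin ℝ h U) U z = 0 :=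
    fun j hj => fderivWithin_vanish hU.uniqueDiffOn hz (hvanh (j + 1) (by omega))
  have hvg : ∀ v : Fin (n + 1), ∀ j ≤ p - 1,
      iteratedFDerivWithin ℝ j (fun y => fderivWithin ℝ h U y (Pi.single v 1)) U z = 0 :=
    fun v j hj => itW_apply_vanish hU hz hfd (by omega) (hvfd j hj) _
  have hgs : ∀ v : Fin (n + 1), ContDiffOn ℝ (p : ℕ)
      (fun y => fderivWithin ℝ h U y (Pi.single v 1)) U :=
    fun v => hfd.clm_apply contDiffOn_const
  -- wh vanishing via the bilinear lemma
  have hwh_eq : ∀ k : Fin n, whAux n a h U k = fun x =>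
      (ContinuousLinearMap.mul ℝ ℝ) (a x)
        ((fun y => fderivWithin ℝ h U y (Pi.single k.castSucc 1)) x) := by
    intro k; funext x; simp [whAux]
  have hvwh : ∀ k : Fin n, ∀ j ≤ p - 1,
      iteratedFDerivWithin ℝ j (whAux n a h U k) U z = 0 := by
    intro k j hj
    rw [hwh_eq k]
    exact bilinear_vanish hU hz j (ContinuousLinearMap.mul ℝ ℝ) (p - 1) a
      (fun y => fderivWithin ℝ h U y (Pi.single k.castSucc 1))
      (ha.contDiffOn.of_le (by exact_mod_cast (show p - 1 ≤ p by omega)))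
      ((hgs _).of_le (by exact_mod_cast (show p - 1 ≤ p by omega)))
      (fun j' hj' => hvg _ j' hj') hj
  have hwhs := fun k => whAux_smooth hU hp1 ha hh k
  have hsuccp : ((p - 1 : ℕ) : WithTop ℕ∞) + 1 ≤ ((p : ℕ) : WithTop ℕ∞) := by
    exact_mod_cast (show p - 1 + 1 ≤ p by omega)
  have hvsh : ∀ k : Fin n, ∀ j ≤ p - 2, iteratedFDerivWithin ℝ j
      (fun x => fderivWithin ℝ (whAux n a h U k) U x (Pi.single k.castSucc 1)) U z = 0 := by
    intro k j hj
    refine itW_apply_vanish hU hz ((hwhs k).fderivWithin hU.uniqueDiffOn hsuccp)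
      (show j ≤ p - 1 by omega) ?_ _
    exact fderivWithin_vanish hU.uniqueDiffOn hz (hvwh k (j + 1) (by omega))
  have hvvt : ∀ j ≤ p - 2, iteratedFDerivWithin ℝ j
      (fun x => fderivWithin ℝ
        (fun y => fderivWithin ℝ h U y (Pi.single (Fin.last n) 1)) U x
        (Pi.single (Fin.last n) 1)) U z = 0 := by
    intro j hj
    refine itW_apply_vanish hU hz (((hgs _).fderivWithin hU.uniqueDiffOn hsuccp))
      (show j ≤ p - 1 by omega) ?_ _
    exact fderivWithin_vanish hU.uniqueDiffOn hz (hvg _ (j + 1) (by omega))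
  -- assemble
  have hvts : ContDiffOn ℝ (p - 2 : ℕ)
      (fun x => fderivWithin ℝ
        (fun y => fderivWithin ℝ h U y (Pi.single (Fin.last n) 1)) U x
        (Pi.single (Fin.last n) 1)) U :=
    (((hgs _).fderivWithin hU.uniqueDiffOn hsuccp).clm_apply contDiffOn_const).of_le
      (by exact_mod_cast (show p - 2 ≤ p - 1 by omega))
  have hrs : ContDiffOn ℝ (p - 2 : ℕ)
      (fun x => b x * fderivWithin ℝ
        (fun y => fderivWithin ℝ h U y (Pi.single (Fin.last n) 1)) U x
        (Pi.single (Fin.last n) 1)) U :=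
    (hb.contDiffOn.of_le (by exact_mod_cast (show p - 2 ≤ p by omega))).mul hvts
  have hvr : iteratedFDerivWithin ℝ m
      (fun x => b x * fderivWithin ℝ
        (fun y => fderivWithin ℝ h U y (Pi.single (Fin.last n) 1)) U x
        (Pi.single (Fin.last n) 1)) U z = 0 := by
    have heq : (fun x => b x * fderivWithin ℝ
        (fun y => fderivWithin ℝ h U y (Pi.single (Fin.last n) 1)) U x
        (Pi.single (Fin.last n) 1))
        = fun x => (ContinuousLinearMap.mul ℝ ℝ) (b x)
            ((fun x' => fderivWithin ℝ
              (fun y => fderivWithin ℝ h U y (Pi.single (Fin.last n) 1)) U x'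
              (Pi.single (Fin.last n) 1)) x) := by
      funext x; simp
    rw [heq]
    exact bilinear_vanish hU hz m (ContinuousLinearMap.mul ℝ ℝ) (p - 2) b _
      (hb.contDiffOn.of_le (by exact_mod_cast (show p - 2 ≤ p by omega)))
      hvts hvvt hm
  have hS1s : ContDiffOn ℝ (m : ℕ)
      (fun x => ∑ k : Fin n, fderivWithin ℝ (whAux n a h U k) U x (Pi.single k.castSucc 1)) U := by
    refine ContDiffOn.sum fun k _ => ?_
    refine (((hwhs k).fderivWithin hU.uniqueDiffOn hsuccp).clm_apply contDiffOn_const).of_le ?_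
    exact_mod_cast (show m ≤ p - 1 by omega)
  have hXeq : XhAux n a b h U = fun x =>
      (fun x' => ∑ k : Fin n,
        fderivWithin ℝ (whAux n a h U k) U x' (Pi.single k.castSucc 1)) x
      + (fun x' => -(b x' * fderivWithin ℝ
          (fun y => fderivWithin ℝ h U y (Pi.single (Fin.last n) 1)) U x'
          (Pi.single (Fin.last n) 1))) x := by
    funext x; simp [XhAux, sub_eq_add_neg]
  rw [hXeq, iteratedFDerivWithin_add_apply' (hS1s z hz) (hrs.neg.of_le
    (by exact_mod_cast (show m ≤ p - 2 by omega)) z hz) hU.uniqueDiffOn hz]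
  have hsum : iteratedFDerivWithin ℝ m
      (fun x' => ∑ k : Fin n,
        fderivWithin ℝ (whAux n a h U k) U x' (Pi.single k.castSucc 1)) U z
      = ∑ k : Fin n, iteratedFDerivWithin ℝ m
          (fun x' => fderivWithin ℝ (whAux n a h U k) U x' (Pi.single k.castSucc 1)) U z :=
    iteratedFDerivWithin_fun_sum_apply hU.uniqueDiffOn hz fun k _ =>
      (((hwhs k).fderivWithin hU.uniqueDiffOn hsuccp).clm_apply contDiffOn_const).of_le
        (by exact_mod_cast (show m ≤ p - 1 by omega)) z hz
  have hneg : iteratedFDerivWithin ℝ m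
      (fun x' => -(b x' * fderivWithin ℝ
        (fun y => fderivWithin ℝ h U y (Pi.single (Fin.last n) 1)) U x'
        (Pi.single (Fin.last n) 1))) U z
      = -iteratedFDerivWithin ℝ m
          (fun x' => b x' * fderivWithin ℝ
            (fun y => fderivWithin ℝ h U y (Pi.single (Fin.last n) 1)) U x'
            (Pi.single (Fin.last n) 1)) U z :=
    iteratedFDerivWithin_neg_apply hU.uniqueDiffOn hz
  rw [hsum, hneg, hvr]
  have : ∀ k : Fin n, iteratedFDerivWithin ℝ m
      (fun x' => fderivWithin ℝ (whAux n a h U k) U x' (Pi.single k.castSucc 1)) U z = 0 :=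
    fun k => hvsh k m hm
  simp [this]

end XhFacts

lemma box_split {n : ℕ} (ρ G : (Fin n → ℝ) → ℝ)
    (ha : ∀ N : ℕ, ContDiff ℝ (N : ℕ) (fun y => (ρ (spatial n y))⁻¹))
    {T u : (Fin (n + 1) → ℝ) → ℝ} {U : Set (Fin (n + 1) → ℝ)} (hU : IsOpen U)
    (hT : ContDiffOn ℝ (2 : ℕ) T U) (hu : ContDiffOn ℝ (2 : ℕ) u U)
    {x : Fin (n + 1) → ℝ} (hx : x ∈ U) :
    boxOp n ρ G T x = boxOp n ρ G u x
      + XhAux n (fun y => (ρ (spatial n y))⁻¹) (fun y => G (spatial n y))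
          (fun y => T y - u y) U x := by
  rw [boxOp_eq_fderiv_at ρ G (ha 1) hU hT hx, boxOp_eq_fderiv_at ρ G (ha 1) hU hu hx]
  have hh2 : ContDiffOn ℝ (2 : ℕ) (fun y => T y - u y) U := hT.sub hu
  have hTd : ∀ y ∈ U, DifferentiableAt ℝ T y := fun y hy =>
    ((hT.differentiableOn (by norm_num)) y hy).differentiableAt (hU.mem_nhds hy)
  have hud : ∀ y ∈ U, DifferentiableAt ℝ u y := fun y hy =>
    ((hu.differentiableOn (by norm_num)) y hy).differentiableAt (hU.mem_nhds hy)
  have had : ∀ y, DifferentiableAt ℝ (fun y' => (ρ (spatial n y'))⁻¹) y :=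
    fun y => ((ha 1).differentiable (by norm_num)) y
  have hfdT : ∀ v : Fin (n + 1) → ℝ, ∀ y ∈ U,
      DifferentiableAt ℝ (fun y' => fderiv ℝ T y' v) y := by
    intro v y hy
    have h1 := (hT.fderiv_of_isOpen hU (by norm_num) : ContDiffOn ℝ (1 : ℕ) (fderiv ℝ T) U)
    exact (((h1.differentiableOn (by norm_num)) y hy).differentiableAt
      (hU.mem_nhds hy)).clm_apply (differentiableAt_const _)
  have hfdu : ∀ v : Fin (n + 1) → ℝ, ∀ y ∈ U,
      DifferentiableAt ℝ (fun y' => fderiv ℝ u y' v) y := by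
    intro v y hy
    have h1 := (hu.fderiv_of_isOpen hU (by norm_num) : ContDiffOn ℝ (1 : ℕ) (fderiv ℝ u) U)
    exact (((h1.differentiableOn (by norm_num)) y hy).differentiableAt
      (hU.mem_nhds hy)).clm_apply (differentiableAt_const _)
  have hfdh : ∀ v : Fin (n + 1) → ℝ, ∀ y ∈ U,
      DifferentiableAt ℝ
        (fun y' => fderivWithin ℝ (fun y'' => T y'' - u y'') U y' v) y := by
    intro v y hy
    have h1 : ContDiffOn ℝ (1 : ℕ) (fderivWithin ℝ (fun y'' => T y'' - u y'') U) U :=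
      hh2.fderivWithin hU.uniqueDiffOn (by exact_mod_cast (by norm_num : (1:ℕ) + 1 ≤ 2))
    exact (((h1.differentiableOn (by norm_num)) y hy).differentiableAt
      (hU.mem_nhds hy)).clm_apply (differentiableAt_const _)
  have key : ∀ v : Fin (n + 1) → ℝ, ∀ y ∈ U, fderiv ℝ T y v
      = fderiv ℝ u y v + fderivWithin ℝ (fun y'' => T y'' - u y'') U y v := by
    intro v y hy
    rw [fderivWithin_of_isOpen hU hy, fderiv_fun_sub (hTd y hy) (hud y hy)]
    simp
  have hkey : ∀ v v' : Fin (n + 1) → ℝ, x ∈ U →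
      fderiv ℝ (fun y => fderiv ℝ T y v) x v'
        = fderiv ℝ (fun y => fderiv ℝ u y v) x v'
          + fderiv ℝ (fun y => fderivWithin ℝ (fun y'' => T y'' - u y'') U y v) x v' := by
    intro v v' hx'
    have hcong : fderiv ℝ (fun y => fderiv ℝ T y v) x
        = fderiv ℝ (fun y => fderiv ℝ u y v
            + fderivWithin ℝ (fun y'' => T y'' - u y'') U y v) x :=
      Filter.EventuallyEq.fderiv_eq
        ((show Set.EqOn (fun y => fderiv ℝ T y v)
            (fun y => fderiv ℝ u y v
              + fderivWithin ℝ (fun y'' => T y'' - u y'') U y v) U from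
          fun y hy => key v y hy).eventuallyEq_of_mem (hU.mem_nhds hx'))
    rw [hcong, fderiv_fun_add (hfdu v x hx') (hfdh v x hx')]
    rfl
  have keyw : ∀ k : Fin n, ∀ y ∈ U,
      (ρ (spatial n y))⁻¹ * fderiv ℝ T y (Pi.single k.castSucc 1)
        = ((ρ (spatial n y))⁻¹ * fderiv ℝ u y (Pi.single k.castSucc 1))
          + whAux n (fun y' => (ρ (spatial n y'))⁻¹) (fun y' => T y' - u y') U k y := by
    intro k y hy
    rw [key _ y hy]
    show _ = (ρ (spatial n y))⁻¹ * fderiv ℝ u y (Pi.single k.castSucc 1)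
      + (ρ (spatial n y))⁻¹
        * fderivWithin ℝ (fun y'' => T y'' - u y'') U y (Pi.single k.castSucc 1)
    ring
  have hkeyw : ∀ k : Fin n,
      fderiv ℝ (fun y => (ρ (spatial n y))⁻¹ * fderiv ℝ T y (Pi.single k.castSucc 1)) x
          (Pi.single k.castSucc 1)
        = fderiv ℝ (fun y => (ρ (spatial n y))⁻¹
              * fderiv ℝ u y (Pi.single k.castSucc 1)) x (Pi.single k.castSucc 1)
          + fderivWithin ℝ
              (whAux n (fun y' => (ρ (spatial n y'))⁻¹) (fun y' => T y' - u y') U k) U x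
              (Pi.single k.castSucc 1) := by
    intro k
    have hcong : fderiv ℝ
        (fun y => (ρ (spatial n y))⁻¹ * fderiv ℝ T y (Pi.single k.castSucc 1)) x
        = fderiv ℝ (fun y => ((ρ (spatial n y))⁻¹ * fderiv ℝ u y (Pi.single k.castSucc 1))
            + whAux n (fun y' => (ρ (spatial n y'))⁻¹) (fun y' => T y' - u y') U k y) x :=
      Filter.EventuallyEq.fderiv_eq
        ((show Set.EqOn
            (fun y => (ρ (spatial n y))⁻¹ * fderiv ℝ T y (Pi.single k.castSucc 1))
            (fun y => ((ρ (spatial n y))⁻¹ * fderiv ℝ u y (Pi.single k.castSucc 1))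
              + whAux n (fun y' => (ρ (spatial n y'))⁻¹) (fun y' => T y' - u y') U k y) U from
          fun y hy => keyw k y hy).eventuallyEq_of_mem (hU.mem_nhds hx))
    have hd1 : DifferentiableAt ℝ
        (fun y => (ρ (spatial n y))⁻¹ * fderiv ℝ u y (Pi.single k.castSucc 1)) x :=
      (had x).mul (hfdu _ x hx)
    have hd2 : DifferentiableAt ℝ
        (whAux n (fun y' => (ρ (spatial n y'))⁻¹) (fun y' => T y' - u y') U k) x :=
      (had x).mul (hfdh _ x hx)
    rw [hcong, fderiv_fun_add hd1 hd2, fderivWithin_of_isOpen hU hx]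
    rfl
  rw [Finset.sum_congr rfl fun k _ => hkeyw k, hkey _ _ hx, Finset.sum_add_distrib]
  show _ = _ + XhAux n (fun y => (ρ (spatial n y))⁻¹) (fun y => G (spatial n y))
      (fun y => T y - u y) U x
  rw [XhAux]
  rw [show fderiv ℝ (fun y => fderivWithin ℝ (fun y'' => T y'' - u y'') U y
        (Pi.single (Fin.last n) 1)) x
      = fderivWithin ℝ (fun y => fderivWithin ℝ (fun y'' => T y'' - u y'') U y
        (Pi.single (Fin.last n) 1)) U x from (fderivWithin_of_isOpen hU hx).symm]
  ring

/-- The Taylor polynomial of a solution of □_{ρ,G} u = 0 lies in the quasi-Trefftz space: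
its image under the wave operator has vanishing derivatives of order ≤ p−2 at the center. -/
theorem taylorPoly_mem_quasiTrefftz (n p : ℕ) (ρ G : (Fin n → ℝ) → ℝ)
    (hρ : ContDiff ℝ (⊤ : ℕ∞) ρ) (hG : ContDiff ℝ (⊤ : ℕ∞) G)
    (hρpos : ∀ x, 0 < ρ x) (hGpos : ∀ x, 0 < G x)
    (zK : Fin (n + 1) → ℝ) (U : Set (Fin (n + 1) → ℝ)) (hU : IsOpen U) (hzU : zK ∈ U)
    (u : (Fin (n + 1) → ℝ) → ℝ) (hu : ContDiffOn ℝ (p + 1 : ℕ) u U)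
    (hsol : ∀ x ∈ U, boxOp n ρ G u x = 0)
    (i : Fin (n + 1) → ℕ) (hi : (∑ l, i l) + 2 ≤ p) :
    mderiv (n + 1) i (boxOp n ρ G (taylorPoly (n + 1) p zK u)) zK = 0 := by
  have hp2 : 2 ≤ p := by omega
  have hspa : ∀ N : ℕ, ContDiff ℝ (N : ℕ) (spatial n) := by
    intro N
    rw [contDiff_pi]
    intro k
    exact (ContinuousLinearMap.proj (R := ℝ) (φ := fun _ : Fin (n + 1) => ℝ)
      k.castSucc).contDiff
  have haN : ∀ N : ℕ, ContDiff ℝ (N : ℕ) (fun y => (ρ (spatial n y))⁻¹) := fun N =>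
    ((hρ.of_le (by exact_mod_cast le_top)).comp (hspa N)).inv fun y => (hρpos _).ne'
  have hbN : ∀ N : ℕ, ContDiff ℝ (N : ℕ) (fun y => G (spatial n y)) := fun N =>
    (hG.of_le (by exact_mod_cast le_top)).comp (hspa N)
  have hT2 : ContDiffOn ℝ (2 : ℕ) (taylorPoly (n + 1) p zK u) U :=
    (contDiff_taylorPoly _ p zK u).contDiffOn
  have hu2 : ContDiffOn ℝ (2 : ℕ) u U :=
    hu.of_le (by exact_mod_cast (show 2 ≤ p + 1 by omega))
  have hEqXh : Set.EqOn (boxOp n ρ G (taylorPoly (n + 1) p zK u))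
      (XhAux n (fun y => (ρ (spatial n y))⁻¹) (fun y => G (spatial n y))
        (fun y => taylorPoly (n + 1) p zK u y - u y) U) U := by
    intro x hx
    rw [box_split ρ G haN hU hT2 hu2 hx, hsol x hx, zero_add]
  have hhsm : ContDiffOn ℝ (p + 1 : ℕ)
      (fun y => taylorPoly (n + 1) p zK u y - u y) U :=
    (contDiff_taylorPoly _ p zK u).contDiffOn.sub hu
  have hXsm : ContDiffOn ℝ (p - 1 : ℕ)
      (XhAux n (fun y => (ρ (spatial n y))⁻¹) (fun y => G (spatial n y))
        (fun y => taylorPoly (n + 1) p zK u y - u y) U) U :=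
    XhAux_smooth hU (by omega) (haN p) (hbN p) hhsm
  have hvanh : ∀ j ≤ p, iteratedFDerivWithin ℝ j
      (fun y => taylorPoly (n + 1) p zK u y - u y) U zK = 0 :=
    fun j hj => taylor_diff_vanish hU hzU hu hj
  have hlen : (sList (n + 1) i).length = ∑ l, i l := by
    have h1 := sum_count (sList (n + 1) i)
    have h2 : ∑ k, (sList (n + 1) i).count k = ∑ l, i l :=
      Finset.sum_congr rfl fun k _ => count_sList i k
    omega
  have hXvan := XhAux_vanish hU hzU hp2 (haN p) (hbN p) hhsm hvanh
    (m := (sList (n + 1) i).length) (by omega)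
  have hbox_sm : ContDiffOn ℝ ((∑ l, i l : ℕ))
      (boxOp n ρ G (taylorPoly (n + 1) p zK u)) U :=
    (hXsm.of_le (by exact_mod_cast (show (∑ l, i l) ≤ p - 1 by omega))).congr
      fun x hx => hEqXh hx
  rw [mderiv_eq_pdList]
  rw [pdList_eq_itW hU hbox_sm (sList (n + 1) i) (le_of_eq hlen) zK hzU]
  rw [iteratedFDerivWithin_congr hEqXh hzU]
  rw [hXvan]
  simp
end

section
/- Let g : ℕ₀ⁿ → ℝ with g_𝟎 ≠ 0 and ζ : ℕ₀ⁿ → ℝ be given, and fix arbitrary values a_{𝒌_x,0}, a_{𝒌_x,1} for all 𝒌_x ∈ ℕ₀ⁿ. Then there exists a unique family of coefficients (a_{𝒌_x,k_t})_{𝒌_x∈ℕ₀ⁿ, k_t∈ℕ₀} extending the given values and satisfying, for every (𝒊_x, i_t) ∈ ℕ₀ⁿ × ℕ₀, the recurrence a_{𝒊_x, i_t+2} = −Σ_{𝒋_x < 𝒊_x} (g_{𝒊_x−𝒋_x}/g_𝟎) a_{𝒋_x, i_t+2} + Σ_{l=1}^{n} Σ_{𝒋_x ≤ 𝒊_x+e_l}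 ((i_{x_l}+1)(j_{x_l}+1) ζ_{𝒊_x+e_l−𝒋_x} / ((i_t+2)(i_t+1) g_𝟎)) a_{𝒋_x+e_l, i_t}. -/
/-!
The coefficient `a_{𝒊_x, i_t}` with `i_t ≥ 2` is expressed through coefficients with a smaller
time index, or with the same time index and a componentwise smaller spatial multi-index.
Ordering the index pairs lexicographically by time first, then by the (well-founded) product
order on `ℕⁿ`, the recurrence therefore defines the coefficients by well-founded recursion, and
any two solutions agree by well-founded induction.
-/

namespace WellFounded

variable {α β : Type*} {r : α → α → Prop}

theorem existsUnique_eq_of_congr (hr : WellFounded r) [Nonempty β] (F : (α → β) → α → β)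
    (hF : ∀ f f' x, (∀ y, r y x → f y = f' y) → F f x = F f' x) :
    ∃! f : α → β, ∀ x, f x = F f x := by
  classical
  inhabit β
  -- `fix` only supplies values at `r`-predecessors; by `hF` the filler `default` is never seen.
  let f := hr.fix fun x rec => F (fun y => if h : r y x then rec y h else default) x
  have hf (x : α) : f x = F f x :=
    (hr.fix_eq _ x).trans (hF _ _ x fun y hy => dif_pos hy)
  refine ⟨f, hf, fun f' hf' => funext fun x => ?_⟩
  induction x using hr.induction with
  | _ x ih => rw [hf' x, hf x]; exact hF _ _ x ih

end WellFounded

namespace QuasiTrefftz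

variable {n : ℕ}

noncomputable def recurrenceRHS (g ζ : (Fin n → ℕ) → ℝ) (a : (Fin n → ℕ) → ℕ → ℝ)
    (ix : Fin n → ℕ) (it : ℕ) : ℝ :=
  -(∑ jx ∈ (Finset.Iic ix).erase ix, g (ix - jx) / g 0 * a jx (it + 2))
    + ∑ l : Fin n, ∑ jx ∈ Finset.Iic (ix + Pi.single l 1),
        ((ix l + 1) * (jx l + 1) : ℝ) * ζ (ix + Pi.single l 1 - jx) /
            (((it : ℝ) + 2) * ((it : ℝ) + 1) * g 0) *
          a (jx + Pi.single l 1) it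

noncomputable def step (g ζ a0 a1 : (Fin n → ℕ) → ℝ) (a : (Fin n → ℕ) × ℕ → ℝ) :
    (Fin n → ℕ) × ℕ → ℝ
  | (kx, 0) => a0 kx
  | (kx, 1) => a1 kx
  | (ix, it + 2) => recurrenceRHS g ζ (Function.curry a) ix it

def Precedes : (Fin n → ℕ) × ℕ → (Fin n → ℕ) × ℕ → Prop :=
  InvImage (Prod.Lex (· < ·) (· < ·)) Prod.swap

theorem wellFounded_precedes : WellFounded (Precedes (n := n)) :=
  InvImage.wf _ (wellFounded_lt.prod_lex wellFounded_lt)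

theorem step_congr (g ζ a0 a1 : (Fin n → ℕ) → ℝ) (a a' : (Fin n → ℕ) × ℕ → ℝ)
    (p : (Fin n → ℕ) × ℕ) (h : ∀ q, Precedes q p → a q = a' q) :
    step g ζ a0 a1 a p = step g ζ a0 a1 a' p := by
  obtain ⟨ix, _ | _ | it⟩ := p
  · rfl
  · rfl
  have same_time : ∀ jx ∈ (Finset.Iic ix).erase ix, a (jx, it + 2) = a' (jx, it + 2) := by
    intro jx hjx
    rw [Finset.Iic_erase, Finset.mem_Iio] at hjx
    exact h _ (Prod.Lex.right _ hjx)
  have earlier_time : ∀ jx, a (jx, it) = a' (jx, it) := fun jx =>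
    h _ (Prod.Lex.left _ _ (by omega))
  simp only [step, recurrenceRHS, Function.curry_apply, earlier_time]
  rw [Finset.sum_congr rfl fun jx hjx => by rw [same_time jx hjx]]

theorem forall_eq_step_iff (g ζ a0 a1 : (Fin n → ℕ) → ℝ) (a : (Fin n → ℕ) × ℕ → ℝ) :
    (∀ p, a p = step g ζ a0 a1 a p) ↔
      (∀ kx, a (kx, 0) = a0 kx) ∧ (∀ kx, a (kx, 1) = a1 kx) ∧
        ∀ ix it, a (ix, it + 2) = recurrenceRHS g ζ (Function.curry a) ix it := by
  refine ⟨fun h => ⟨fun kx => h (kx, 0), fun kx => h (kx, 1), fun ix it => h (ix, it + 2)⟩, ?_⟩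
  rintro ⟨h0, h1, h2⟩ ⟨kx, _ | _ | it⟩
  exacts [h0 kx, h1 kx, h2 kx it]

end QuasiTrefftz

open QuasiTrefftz in
theorem quasiTrefftz_basis_recurrence_wellDefined_general (n : ℕ)
    (g ζ : (Fin n → ℕ) → ℝ) (a0 a1 : (Fin n → ℕ) → ℝ) :
    ∃! a : (Fin n → ℕ) → ℕ → ℝ,
      (∀ kx, a kx 0 = a0 kx) ∧ (∀ kx, a kx 1 = a1 kx) ∧
      ∀ (ix : Fin n → ℕ) (it : ℕ),
        a ix (it + 2) =
          -(∑ jx ∈ (Finset.Iic ix).erase ix, g (ix - jx) / g 0 * a jx (it + 2))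
          + ∑ l : Fin n, ∑ jx ∈ Finset.Iic (ix + Pi.single l 1),
              ((ix l + 1) * (jx l + 1) : ℝ) * ζ (ix + Pi.single l 1 - jx) /
                  (((it : ℝ) + 2) * ((it : ℝ) + 1) * g 0) *
                a (jx + Pi.single l 1) it := by
  refine ((Equiv.curry _ _ _).existsUnique_congr fun a => forall_eq_step_iff g ζ a0 a1 a).mp ?_
  exact wellFounded_precedes.existsUnique_eq_of_congr _ (step_congr g ζ a0 a1)

/-- Well-definedness of the quasi-Trefftz basis construction: given g with g₀ ≠ 0, ζ, and
Cauchy data a_{𝒌_x,0}, a_{𝒌_x,1}, there is a unique family of coefficients satisfying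
the recurrence of Algorithm 2. -/
theorem quasiTrefftz_basis_recurrence_wellDefined (n : ℕ)
    (g ζ : (Fin n → ℕ) → ℝ) (hg : g 0 ≠ 0) (a0 a1 : (Fin n → ℕ) → ℝ) :
    ∃! a : (Fin n → ℕ) → ℕ → ℝ,
      (∀ kx, a kx 0 = a0 kx) ∧ (∀ kx, a kx 1 = a1 kx) ∧
      ∀ (ix : Fin n → ℕ) (it : ℕ),
        a ix (it + 2) =
          -(∑ jx ∈ (Finset.Iic ix).erase ix, g (ix - jx) / g 0 * a jx (it + 2))
          + ∑ l : Fin n, ∑ jx ∈ Finset.Iic (ix + Pi.single l 1),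
              ((ix l + 1) * (jx l + 1) : ℝ) * ζ (ix + Pi.single l 1 - jx) /
                  (((it : ℝ) + 2) * ((it : ℝ) + 1) * g 0) *
                a (jx + Pi.single l 1) it :=
  quasiTrefftz_basis_recurrence_wellDefined_general n g ζ a0 a1
end

section
/- Let □ f := ∂_x² f − (1+x)∂_t² f on ℝ², and let f(x,t) = x² + t². Then □f(0,0) = 0 and ∂_x(□f)(0,0) = −2; hence f lies in the quasi-Trefftz space ℚ𝕌² centered at the origin (with ρ=1, G(x)=1+x) but not in ℚ𝕌³, proving that quasi-Trefftz spaces of increasing degree are not nested in general. -/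
/-- Wave operator □f = ∂_x²f − (1+x)∂_t²f (ρ = 1, G(x) = 1+x) centered at the origin. -/
noncomputable def boxG (f : (Fin 2 → ℝ) → ℝ) : (Fin 2 → ℝ) → ℝ :=
  fun x => mderiv 2 ![2, 0] f x - (1 + x 0) * mderiv 2 ![0, 2] f x

theorem mderiv_fin_two (i : Fin 2 → ℕ) (f : (Fin 2 → ℝ) → ℝ) :
    mderiv 2 i f = (pd 2 0)^[i 0] ((pd 2 1)^[i 1] f) := by
  simp [mderiv, List.ofFn_succ]

theorem pd_comp_coord (d : ℕ) (k : Fin d) (g : ℝ → ℝ) :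
    pd d k (fun y => g (y k)) = fun y => deriv g (y k) := by
  funext x
  simp [pd]

/-- No differentiability is needed: along the `k`-th line the other summands are constant. -/
theorem pd_sum_comp_coord (d : ℕ) (k : Fin d) (g : Fin d → ℝ → ℝ) :
    pd d k (fun y => ∑ j, g j (y j)) = fun y => deriv (g k) (y k) := by
  funext x
  have hline : (fun s => ∑ j, g j (Function.update x k s j)) =
      fun s => g k s + ∑ j ∈ Finset.univ.erase k, g j (x j) := by
    funext s
    rw [← Finset.add_sum_erase _ _ (Finset.mem_univ k), Function.update_self]
    congr 1
    refine Finset.sum_congr rfl fun j hj => ?_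
    rw [Function.update_of_ne (Finset.ne_of_mem_erase hj)]
  simp only [pd, hline, deriv_add_const]

theorem boxG_sq_add_sq : boxG (fun y => y 0 ^ 2 + y 1 ^ 2) = fun x => -(2 * x 0) := by
  have hsum : (fun y : Fin 2 → ℝ => y 0 ^ 2 + y 1 ^ 2) = fun y => ∑ j, y j ^ 2 := by
    simp [Fin.sum_univ_two]
  have hsecond (k : Fin 2) : pd 2 k (pd 2 k fun y => y 0 ^ 2 + y 1 ^ 2) = fun _ => 2 := by
    have hsq : deriv (fun s : ℝ => s ^ 2) = fun s => 2 * s := by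
      funext s
      simp
    rw [hsum, pd_sum_comp_coord 2 k fun _ s => s ^ 2, hsq, pd_comp_coord 2 k fun s => 2 * s,
      deriv_const_mul_id']
  funext x
  simp only [boxG, mderiv_fin_two, Matrix.cons_val_zero, Matrix.cons_val_one,
    Matrix.cons_val_fin_one, Function.iterate_zero, id_eq, Function.iterate_succ,
    Function.comp_apply, hsecond]
  ring

/-- f(x,t) = x²+t² satisfies □f(0,0) = 0 and ∂_x(□f)(0,0) = −2, so f ∈ ℚ𝕌² but
f ∉ ℚ𝕌³: quasi-Trefftz spaces are not nested. -/
theorem quasiTrefftz_not_nested :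
    boxG (fun y => (y 0) ^ 2 + (y 1) ^ 2) 0 = 0 ∧
    mderiv 2 ![1, 0] (boxG (fun y => (y 0) ^ 2 + (y 1) ^ 2)) 0 = -2 ∧
    (∀ i : Fin 2 → ℕ, i 0 + i 1 ≤ 0 →
      mderiv 2 i (boxG (fun y => (y 0) ^ 2 + (y 1) ^ 2)) 0 = 0) ∧
    ¬(∀ i : Fin 2 → ℕ, i 0 + i 1 ≤ 1 →
      mderiv 2 i (boxG (fun y => (y 0) ^ 2 + (y 1) ^ 2)) 0 = 0) := by
  have hbox_zero : boxG (fun y => y 0 ^ 2 + y 1 ^ 2) 0 = 0 := by simp [boxG_sq_add_sq]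
  have hdx : mderiv 2 ![1, 0] (boxG (fun y => y 0 ^ 2 + y 1 ^ 2)) 0 = -2 := by
    rw [boxG_sq_add_sq, mderiv_fin_two]
    simp [pd_comp_coord (g := fun s => -(2 * s))]
  refine ⟨hbox_zero, hdx, fun i hi => ?_, fun h => ?_⟩
  · obtain rfl : i = 0 := by
      ext j; fin_cases j <;> simp <;> omega
    rwa [mderiv_fin_two]
  · have := h ![1, 0] (by simp)
    rw [hdx] at this
    norm_num at this
end
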